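/- Let G be a mixed graph over the variables X with joint distribution P_X, and let P be a partition of X inducing the coarse graph co(G,P). If the pair (G, P_X) is adjacency faithful, then the pair (co(G,P), P_X) is adjacency faithful: whenever two groups Y, Z ∈ P are mutually conditionally independent given some set S ⊆ P ∖ {Y, Z}, then Y and Z do not share an edge in co(G,P). -/
import Mathlib


/-! ## Mixed graphs -/

/-- A mixed graph: directed, bidirected and undirected edges, no self-edges. -/
structure MixedGraph (V : Type) where
  dir : V → V → Prop
  bidir : V → V → Prop
  undir : V → V → Prop
  bidir_symm : ∀ {a b}, bidir a b → bidir b a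
  undir_symm : ∀ {a b}, undir a b → undir b a
  dir_irrefl : ∀ a, ¬ dir a a
  bidir_irrefl : ∀ a, ¬ bidir a a
  undir_irrefl : ∀ a, ¬ undir a a

namespace MixedGraph

variable {V I : Type}

/-- A directed mixed graph is a mixed graph without undirected edges. -/
def IsDMG (G : MixedGraph V) : Prop := ∀ a b, ¬ G.undir a b

/-- `a` and `b` lie in the same strongly connected component: there are directed
paths between them in both directions. -/
def Strongly (G : MixedGraph V) (a b : V) : Prop :=
  Relation.ReflTransGen G.dir a b ∧ Relation.ReflTransGen G.dir b a

lemma Strongly.refl (G : MixedGraph V) (a : V) : G.Strongly a a :=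
  ⟨Relation.ReflTransGen.refl, Relation.ReflTransGen.refl⟩

lemma Strongly.symm {G : MixedGraph V} {a b : V} (h : G.Strongly a b) : G.Strongly b a :=
  ⟨h.2, h.1⟩

/-- A graph is acyclic if it has no nontrivial directed closed walk. -/
def Acyclic (G : MixedGraph V) : Prop := ∀ a, ¬ Relation.TransGen G.dir a a

end MixedGraph

/-! ## Walks -/

/-- The four ways in which an edge can occur on a walk, as traversed from its
first node `a` to its second node `b`: `fw` is `a → b`, `bw` is `a ← b`,
`bi` is `a ↔ b` and `un` is `a − b`. -/
inductive StepKind | fw | bw | bi | un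
deriving DecidableEq

/-- A step of a walk: an ordered pair of nodes together with the kind of edge. -/
structure Step (V : Type) where
  a : V
  b : V
  k : StepKind

/-- The step is an actual edge of the graph `G`. -/
def Step.ok {V : Type} (G : MixedGraph V) (s : Step V) : Prop :=
  match s.k with
  | .fw => G.dir s.a s.b
  | .bw => G.dir s.b s.a
  | .bi => G.bidir s.a s.b
  | .un => G.undir s.a s.b

/-- The edge of the step has an arrowhead at its first node. -/
def Step.headA {V : Type} (s : Step V) : Prop := s.k = .bw ∨ s.k = .bi

/-- The edge of the step has an arrowhead at its second node. -/
def Step.headB {V : Type} (s : Step V) : Prop := s.k = .fw ∨ s.k = .bi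

namespace MixedGraph

variable {V I : Type}

/-- `IsWalk G x y L`: the list of steps `L` forms a walk from `x` to `y` in `G`. -/
inductive IsWalk (G : MixedGraph V) : V → V → List (Step V) → Prop
  | nil (a : V) : IsWalk G a a []
  | cons {c : V} (s : Step V) (L : List (Step V)) (hok : s.ok G)
      (hw : IsWalk G s.b c L) : IsWalk G s.a c (s :: L)

/-- `v` is a collider at junction `i` of the walk `L`: both edges adjacent to the
inner node `v` point into `v`. -/
def ColliderAt (L : List (Step V)) (i : ℕ) (v : V) : Prop :=
  ∃ s t, L[i]? = some s ∧ L[i+1]? = some t ∧ s.b = v ∧ t.a = v ∧ s.headB ∧ t.headA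

/-- `v` is a non-collider at junction `i` of the walk `L`. -/
def NonColliderAt (L : List (Step V)) (i : ℕ) (v : V) : Prop :=
  ∃ s t, L[i]? = some s ∧ L[i+1]? = some t ∧ s.b = v ∧ t.a = v ∧ ¬ (s.headB ∧ t.headA)

/-- The walk `L` from `x` to `y` is m-blocked by the node set `S`. -/
def MBlockedWalk (G : MixedGraph V) (S : Set V) (x y : V) (L : List (Step V)) : Prop :=
  x ∈ S ∨ y ∈ S ∨
  (∃ i v, ColliderAt L i v ∧ ∀ d, Relation.ReflTransGen G.dir v d → d ∉ S) ∨
  (∃ i v, NonColliderAt L i v ∧ v ∈ S)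

/-- The walk `L` from `x` to `y` is σ-blocked by the node set `S`. -/
def SigmaBlockedWalk (G : MixedGraph V) (S : Set V) (x y : V) (L : List (Step V)) : Prop :=
  x ∈ S ∨ y ∈ S ∨
  (∃ i v, ColliderAt L i v ∧ ∀ d, Relation.ReflTransGen G.dir v d → d ∉ S) ∨
  (∃ i s t, L[i]? = some s ∧ L[i+1]? = some t ∧ s.b = t.a ∧ ¬ (s.headB ∧ t.headA) ∧
    s.b ∈ S ∧
    (((s.k = .bw ∨ s.k = .un) ∧ ¬ G.Strongly s.b s.a) ∨
     ((t.k = .fw ∨ t.k = .un) ∧ ¬ G.Strongly t.a t.b)))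

/-- `x` and `y` are m-separated by `S` in `G`. -/
def MSep (G : MixedGraph V) (S : Set V) (x y : V) : Prop :=
  ∀ L, G.IsWalk x y L → G.MBlockedWalk S x y L

/-- `x` and `y` are σ-separated by `S` in `G`. -/
def SigmaSep (G : MixedGraph V) (S : Set V) (x y : V) : Prop :=
  ∀ L, G.IsWalk x y L → G.SigmaBlockedWalk S x y L

/-! ## Acyclification -/

/-- The acyclification of a mixed graph. -/
def acy (G : MixedGraph V) : MixedGraph V where
  dir a b := (∃ c, G.dir a c ∧ G.Strongly c b) ∧ ¬ G.Strongly a b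
  bidir a b := a ≠ b ∧ (G.Strongly a b ∨
    ∃ a' b', G.Strongly a a' ∧ G.Strongly b b' ∧ G.bidir a' b')
  undir a b := ¬ G.Strongly a b ∧ G.undir a b
  bidir_symm := by
    rintro a b ⟨hab, h | ⟨a', b', ha, hb, h⟩⟩
    · exact ⟨hab.symm, Or.inl h.symm⟩
    · exact ⟨hab.symm, Or.inr ⟨b', a', hb, ha, G.bidir_symm h⟩⟩
  undir_symm := by
    rintro a b ⟨h1, h2⟩
    exact ⟨fun h => h1 h.symm, G.undir_symm h2⟩
  dir_irrefl := fun a h => h.2 (Strongly.refl G a)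
  bidir_irrefl := fun a h => h.1 rfl
  undir_irrefl := fun a h => h.1 (Strongly.refl G a)

/-! ## Coarse graphs -/

/-- The coarse (quotient) graph of `G` with respect to the partition given by the
quotient map `q` onto the set of groups `I`. -/
def coarse (G : MixedGraph V) (q : V → I) : MixedGraph I where
  dir Y Z := Y ≠ Z ∧ ∃ y z, q y = Y ∧ q z = Z ∧ G.dir y z
  bidir Y Z := Y ≠ Z ∧ ∃ y z, q y = Y ∧ q z = Z ∧ G.bidir y z
  undir Y Z := Y ≠ Z ∧ ∃ y z, q y = Y ∧ q z = Z ∧ G.undir y z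
  bidir_symm := by
    rintro Y Z ⟨hne, y, z, hy, hz, h⟩
    exact ⟨hne.symm, z, y, hz, hy, G.bidir_symm h⟩
  undir_symm := by
    rintro Y Z ⟨hne, y, z, hy, hz, h⟩
    exact ⟨hne.symm, z, y, hz, hy, G.undir_symm h⟩
  dir_irrefl := fun Y h => h.1 rfl
  bidir_irrefl := fun Y h => h.1 rfl
  undir_irrefl := fun Y h => h.1 rfl

end MixedGraph

open MeasureTheory ProbabilityTheory

/-- The σ-algebra generated by the group `A` of the random variables `X v`. -/
def genOf {Ω V : Type} [MeasurableSpace Ω] (X : V → Ω → ℝ) (A : Set V) :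
    MeasurableSpace Ω :=
  ⨆ v ∈ A, MeasurableSpace.comap (X v) inferInstance

/-- Mutual conditional independence of the groups `Y` and `Z` of random variables
given the group `W`. -/
def GroupCI {Ω V : Type} [m : MeasurableSpace Ω] [StandardBorelSpace Ω]
    (μ : Measure Ω) [IsFiniteMeasure μ] (X : V → Ω → ℝ) (Y Z W : Set V) : Prop :=
  ∃ h : genOf X W ≤ m, ProbabilityTheory.CondIndep (genOf X W) (genOf X Y) (genOf X Z) h μ

/-- The joint distribution of the variables `X v` has a positive density. -/
def HasPositiveDensity {Ω V : Type} [MeasurableSpace Ω] [Fintype V] (μ : Measure Ω)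
    (X : V → Ω → ℝ) : Prop :=
  ∃ f : (V → ℝ) → ℝ, Measurable f ∧ (∀ x, 0 < f x) ∧
    Measure.map (fun ω v => X v ω) μ = volume.withDensity fun x => ENNReal.ofReal (f x)

open MeasureTheory ProbabilityTheory MixedGraph

variable {Ω V I : Type}

/-- `(G, μ)` is σ-Markovian: σ-separation implies conditional independence. -/
def SigmaMarkov [m : MeasurableSpace Ω] [StandardBorelSpace Ω] (G : MixedGraph V)
    (μ : Measure Ω) [IsFiniteMeasure μ] (X : V → Ω → ℝ) : Prop :=
  ∀ (a b : V) (S : Set V), G.SigmaSep S a b → GroupCI μ X {a} {b} S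

/-- `(G, μ)` is σ-faithful: conditional independence implies σ-separation. -/
def SigmaFaithful [m : MeasurableSpace Ω] [StandardBorelSpace Ω] (G : MixedGraph V)
    (μ : Measure Ω) [IsFiniteMeasure μ] (X : V → Ω → ℝ) : Prop :=
  ∀ (a b : V) (S : Set V), GroupCI μ X {a} {b} S → G.SigmaSep S a b

/-- `(G, μ)` is m-Markovian: m-separation implies conditional independence. -/
def MMarkov [m : MeasurableSpace Ω] [StandardBorelSpace Ω] (G : MixedGraph V)
    (μ : Measure Ω) [IsFiniteMeasure μ] (X : V → Ω → ℝ) : Prop :=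
  ∀ (a b : V) (S : Set V), G.MSep S a b → GroupCI μ X {a} {b} S

/-- The pair of the coarse graph `G.coarse q` and the distribution is σ-faithful on
the group level: mutual conditional independence of two groups given the union of
the groups in `S` implies their σ-separation by `S` in the coarse graph. -/
def SigmaFaithfulGrp [m : MeasurableSpace Ω] [StandardBorelSpace Ω] (G : MixedGraph V)
    (q : V → I) (μ : Measure Ω) [IsFiniteMeasure μ] (X : V → Ω → ℝ) : Prop :=
  ∀ (Y Z : I) (S : Set I),
    GroupCI μ X (q ⁻¹' {Y}) (q ⁻¹' {Z}) (q ⁻¹' S) → (G.coarse q).SigmaSep S Y Z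

/-- `a` and `b` are adjacent: they share an edge of some type. -/
def MixedGraph.Adjacent {V : Type} (G : MixedGraph V) (a b : V) : Prop :=
  G.dir a b ∨ G.dir b a ∨ G.bidir a b ∨ G.undir a b

open MeasureTheory ProbabilityTheory MixedGraph in
/-- If the micro-level pair `(G, μ)` is adjacency faithful (any
two nodes that are conditionally independent given some conditioning set share no
edge), then so is the pair of the coarse graph and the distribution: whenever two
groups `Y`, `Z` are mutually conditionally independent given the union of a set of
groups `S` with `Y ∉ S` and `Z ∉ S`, then `Y` and `Z` do not share an edge in the
coarse graph. -/
theorem coarse_adjacency_faithful {Ω V I : Type} [MeasurableSpace Ω]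
    [StandardBorelSpace Ω] [Fintype V] (μ : Measure Ω) [IsProbabilityMeasure μ]
    (X : V → Ω → ℝ) (hX : ∀ v, Measurable (X v)) (hpos : HasPositiveDensity μ X)
    (G : MixedGraph V) (q : V → I) (hq : Function.Surjective q)
    (hadj : ∀ (a b : V) (S : Set V), GroupCI μ X {a} {b} S → ¬ G.Adjacent a b) :
    ∀ (Y Z : I) (S : Set I), Y ∉ S → Z ∉ S →
      GroupCI μ X (q ⁻¹' {Y}) (q ⁻¹' {Z}) (q ⁻¹' S) →
      ¬ (G.coarse q).Adjacent Y Z := by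
  intro Y Z S hY hZ hCI hAdj
  obtain ⟨hm, hci⟩ := hCI
  have hmono : ∀ (v : V) (A : Set V), v ∈ A → genOf X {v} ≤ genOf X A := by
    intro v A hv
    refine iSup_le fun w => iSup_le fun hw => ?_
    rcases hw with rfl
    exact le_iSup_of_le w (le_iSup_of_le hv le_rfl)
  have key : ∀ y z, q y = Y → q z = Z → ¬ G.Adjacent y z := by
    intro y z hy hz hadj'
    have h1 : genOf X {y} ≤ genOf X (q ⁻¹' {Y}) := hmono y _ (by simp [hy])
    have h2 : genOf X {z} ≤ genOf X (q ⁻¹' {Z}) := hmono z _ (by simp [hz])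
    exact hadj y z (q ⁻¹' S)
      ⟨hm, Kernel.indep_of_indep_of_le_left
        (Kernel.indep_of_indep_of_le_right hci h2) h1⟩ hadj'
  rcases hAdj with ⟨hne, a, b, ha, hb, h⟩ | ⟨hne, a, b, ha, hb, h⟩ |
      ⟨hne, a, b, ha, hb, h⟩ | ⟨hne, a, b, ha, hb, h⟩
  · exact key a b ha hb (Or.inl h)
  · exact key b a hb ha (Or.inr (Or.inl h))
  · exact key a b ha hb (Or.inr (Or.inr (Or.inl h)))
  · exact key a b ha hb (Or.inr (Or.inr (Or.inr h)))
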